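/- arXiv:2001.03047 — 2 statements merged into one kernel-verified Lean document; each statement's English description precedes it below -/
import Mathlib

section
/- Let m ∈ (−1,1) and μ := arctanh(−m). Let I be a finite nonempty index set and let f : {−1,1}^{|I|} → ℝ be bounded and 1-Lipschitz with respect to the ℓ¹-norm on ℝ^{|I|}. Then for every finite set Λ with N := |Λ| > |I| such that m lies in the range of m_N, |∫ f∘P_I dμ_MC^{m;N} − ∫ f∘P_I dμ_C^{μ;N}| ≤ (|I| / (1 − |I|/N)) · √(1 − m²) · N^{−1/2}. In particular the difference of local expectations is O(N^{−1/2}) as N → ∞. -/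
/-- The inverse hyperbolic tangent, `arctanh x = (1/2) ln((1+x)/(1−x))`. -/
noncomputable def artanh (x : ℝ) : ℝ := Real.log ((1 + x) / (1 - x)) / 2

/-- The magnetization `M[φ] = ∑_x φ(x)` of a spin configuration `φ ∈ {−1,1}^N`,
encoded as `φ : Fin N → Bool` with `true ↦ 1`, `false ↦ −1`. -/
noncomputable def mag {N : ℕ} (φ : Fin N → Bool) : ℝ :=
  ∑ x, if φ x then (1 : ℝ) else -1

-- The set `S_m` of configurations with magnetization density `m`.
open Classical in
noncomputable def magSet (N : ℕ) (m : ℝ) : Finset (Fin N → Bool) :=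
  Finset.univ.filter fun φ => mag φ / N = m

/-- Expectation of `f` in the auxiliary microcanonical ensemble `μ_MC^{m;N}`. -/
noncomputable def mcExp (N : ℕ) (m : ℝ) (f : (Fin N → Bool) → ℝ) : ℝ :=
  (∑ φ ∈ magSet N m, f φ) / ((magSet N m).card : ℝ)

/-- The auxiliary canonical partition function `Z_C(μ;N) = ∑_φ e^{−μ M[φ]}`. -/
noncomputable def Zcan (N : ℕ) (μ : ℝ) : ℝ :=
  ∑ φ : Fin N → Bool, Real.exp (-μ * mag φ)

/-- Expectation of `f` in the auxiliary canonical ensemble `μ_C^{μ;N}`. -/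
noncomputable def canExp (N : ℕ) (μ : ℝ) (f : (Fin N → Bool) → ℝ) : ℝ :=
  (∑ φ : Fin N → Bool, Real.exp (-μ * mag φ) * f φ) / Zcan N μ

/-- The projection `P_I : {−1,1}^N → {−1,1}^n`. -/
noncomputable def projB {N n : ℕ} (I : Finset (Fin N)) (h : I.card = n)
    (φ : Fin N → Bool) (j : Fin n) : Bool :=
  φ ↑(I.orderIsoOfFin h j)

/-- The embedding of a spin value into `ℝ`. -/
noncomputable def spin (b : Bool) : ℝ := if b then 1 else -1

/-!
The canonical ensemble with parameter `artanh (-m)` is the product of the Bernoulli weights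
`(1 + m s) / 2`, and conditioned on the number of up spins it is the microcanonical ensemble
of that slice of the cube. The difference of the two expectations is therefore an average of
differences of microcanonical expectations. Going from the slice with `K` up spins to the one
with `K + 1` by flipping a uniformly chosen down spin changes the expectation of `f ∘ P_I` by at
most `2 |I| / N`: by symmetry the flipped site lies in `I` with probability `|I| / N`. Hence the
difference is at most `(|I| / N) E |M - N m| ≤ (|I| / N) √(Var M) = |I| √(1 - m²) / √N`.
-/

open Finset Function

section Slice

variable {ι : Type*} [Fintype ι] [DecidableEq ι]

def trueCount (φ : ι → Bool) : ℕ := #{x | φ x = true}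

variable (ι) in
def cubeSlice (K : ℕ) : Finset (ι → Bool) := {φ | trueCount φ = K}

@[simp]
theorem mem_cubeSlice {K : ℕ} {φ : ι → Bool} : φ ∈ cubeSlice ι K ↔ trueCount φ = K := by
  simp [cubeSlice]

noncomputable def sliceAvg (K : ℕ) (F : (ι → Bool) → ℝ) : ℝ :=
  (∑ φ ∈ cubeSlice ι K, F φ) / #(cubeSlice ι K)

omit [DecidableEq ι] in
theorem trueCount_comp_perm (φ : ι → Bool) (σ : Equiv.Perm ι) :
    trueCount (φ ∘ σ) = trueCount φ := by
  simp only [trueCount, card_filter]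
  exact Equiv.sum_comp σ fun x => if φ x = true then 1 else 0

theorem trueCount_update_true {φ : ι → Bool} {x : ι} (hx : φ x = false) :
    trueCount (update φ x true) = trueCount φ + 1 := by
  have : univ.filter (fun y => update φ x true y = true) =
      insert x (univ.filter fun y => φ y = true) := by
    ext y
    by_cases hy : y = x
    · subst hy; simp
    · simp [hy]
  rw [trueCount, this, card_insert_of_notMem (by simp [hx]), trueCount]

omit [DecidableEq ι] in
theorem card_filter_eq_false (φ : ι → Bool) :
    #{x | φ x = false} = Fintype.card ι - trueCount φ := by
  have h := card_filter_add_card_filter_not (s := univ) (fun x => φ x = true)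
  simp only [Bool.not_eq_true, card_univ] at h
  rw [trueCount]
  omega

omit [DecidableEq ι] in
theorem trueCount_le_card (φ : ι → Bool) :
    trueCount φ ≤ Fintype.card ι :=
  card_filter_le _ _

theorem cubeSlice_nonempty {K : ℕ} (hK : K ≤ Fintype.card ι) : (cubeSlice ι K).Nonempty := by
  obtain ⟨s, -, hs⟩ := exists_subset_card_eq (s := (univ : Finset ι)) (by simpa using hK)
  refine ⟨fun x => decide (x ∈ s), ?_⟩
  simpa [trueCount] using hs

omit [DecidableEq ι] in
theorem sum_card_filter_mul (s : Finset (ι → Bool)) (b : Bool) (G : (ι → Bool) → ℝ) :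
    ∑ φ ∈ s, (#{x | φ x = b} : ℝ) * G φ = ∑ x, ∑ φ ∈ s with φ x = b, G φ := by
  simp_rw [sum_filter, card_filter, Nat.cast_sum, sum_mul, Nat.cast_ite, ite_mul]
  simp only [Nat.cast_one, one_mul, Nat.cast_zero, zero_mul]
  exact sum_comm

theorem sum_cubeSlice_update_true (K : ℕ) (x : ι) (G : (ι → Bool) → ℝ) :
    ∑ φ ∈ cubeSlice ι K with φ x = false, G (update φ x true) =
      ∑ ψ ∈ cubeSlice ι (K + 1) with ψ x = true, G ψ := by
  refine sum_nbij' (update · x true) (update · x false) ?_ ?_ ?_ ?_ (fun _ _ => rfl)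
  · intro φ hφ
    simp only [mem_cubeSlice, mem_filter] at hφ ⊢
    simp [trueCount_update_true hφ.2, hφ.1]
  · intro ψ hψ
    simp only [mem_cubeSlice, mem_filter] at hψ ⊢
    refine ⟨?_, by simp⟩
    have h := trueCount_update_true (φ := update ψ x false) (x := x) (by simp)
    rw [update_idem, update_eq_self_iff.2 hψ.2.symm, hψ.1] at h
    omega
  · intro φ hφ
    simp only [mem_filter] at hφ
    simp [hφ.2]
  · intro ψ hψ
    simp only [mem_filter] at hψ
    simp [hψ.2]

theorem card_cubeSlice_filter_eq_false (K : ℕ) (x y : ι) :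
    #{φ ∈ cubeSlice ι K | φ x = false} = #{φ ∈ cubeSlice ι K | φ y = false} := by
  have hσ : ∀ {x y : ι} {φ : ι → Bool}, φ ∈ cubeSlice ι K → φ x = false →
      φ ∘ Equiv.swap x y ∈ cubeSlice ι K ∧ (φ ∘ Equiv.swap x y) y = false := by
    intro x y φ hφ hx
    simp only [mem_cubeSlice] at hφ ⊢
    simp [trueCount_comp_perm, hφ, hx]
  refine card_nbij' (· ∘ Equiv.swap x y) (· ∘ Equiv.swap y x) ?_ ?_ ?_ ?_
  · intro φ hφ
    simp only [coe_filter] at hφ ⊢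
    exact hσ hφ.1 hφ.2
  · intro φ hφ
    simp only [coe_filter] at hφ ⊢
    exact hσ hφ.1 hφ.2
  · intro φ _
    ext z; simp [Equiv.swap_comm]
  · intro φ _
    ext z; simp [Equiv.swap_comm]

theorem card_sub_mul_sum_cubeSlice (K : ℕ) (G : (ι → Bool) → ℝ) :
    ((Fintype.card ι - K : ℕ) : ℝ) * ∑ φ ∈ cubeSlice ι K, G φ =
      ∑ x, ∑ φ ∈ cubeSlice ι K with φ x = false, G φ := by
  rw [← sum_card_filter_mul, mul_sum]
  refine sum_congr rfl fun φ hφ => ?_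
  rw [card_filter_eq_false, (mem_cubeSlice.1 hφ)]

theorem succ_mul_sum_cubeSlice_succ (K : ℕ) (G : (ι → Bool) → ℝ) :
    ((K + 1 : ℕ) : ℝ) * ∑ ψ ∈ cubeSlice ι (K + 1), G ψ =
      ∑ x, ∑ φ ∈ cubeSlice ι K with φ x = false, G (update φ x true) := by
  simp_rw [sum_cubeSlice_update_true, ← sum_card_filter_mul, mul_sum]
  refine sum_congr rfl fun ψ hψ => ?_
  rw [← trueCount, (mem_cubeSlice.1 hψ)]

theorem card_mul_card_filter_eq_false (K : ℕ) (x : ι) :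
    (Fintype.card ι : ℝ) * #{φ ∈ cubeSlice ι K | φ x = false} =
      ((Fintype.card ι - K : ℕ) : ℝ) * #(cubeSlice ι K) := by
  have h := card_sub_mul_sum_cubeSlice (ι := ι) K (fun _ => (1 : ℝ))
  simp only [sum_const, nsmul_eq_mul, mul_one] at h
  rw [h, sum_congr rfl fun y _ => by rw [card_cubeSlice_filter_eq_false K y x]]
  simp

theorem sliceAvg_eq_sum_filter_false {K : ℕ} (hK : K < Fintype.card ι) (F : (ι → Bool) → ℝ) :
    sliceAvg K F = (∑ x, ∑ φ ∈ cubeSlice ι K with φ x = false, F φ) /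
      (((Fintype.card ι - K : ℕ) : ℝ) * #(cubeSlice ι K)) := by
  have hNK : ((Fintype.card ι - K : ℕ) : ℝ) ≠ 0 := by
    exact_mod_cast (Nat.sub_pos_of_lt hK).ne'
  rw [← card_sub_mul_sum_cubeSlice, mul_div_mul_left _ _ hNK, sliceAvg]

theorem sliceAvg_succ_eq_sum_update (K : ℕ) (F : (ι → Bool) → ℝ) :
    sliceAvg (K + 1) F = (∑ x, ∑ φ ∈ cubeSlice ι K with φ x = false, F (update φ x true)) /
      (((Fintype.card ι - K : ℕ) : ℝ) * #(cubeSlice ι K)) := by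
  have h₁ := succ_mul_sum_cubeSlice_succ (ι := ι) K (fun _ => (1 : ℝ))
  have h₀ := card_sub_mul_sum_cubeSlice (ι := ι) K (fun _ => (1 : ℝ))
  simp only [sum_const, nsmul_eq_mul, mul_one] at h₀ h₁
  rw [h₀, ← h₁, ← succ_mul_sum_cubeSlice_succ, mul_div_mul_left _ _ (by positivity), sliceAvg]

theorem abs_sliceAvg_succ_sub_le {K : ℕ} (hK : K < Fintype.card ι) (F : (ι → Bool) → ℝ)
    (L : ι → ℝ) (hF : ∀ φ x, |F (update φ x true) - F (update φ x false)| ≤ L x) :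
    |sliceAvg (K + 1) F - sliceAvg K F| ≤ (∑ x, L x) / Fintype.card ι := by
  set P : ℝ := ((Fintype.card ι - K : ℕ) : ℝ) * #(cubeSlice ι K)
  have hP : 0 < P := mul_pos (by exact_mod_cast Nat.sub_pos_of_lt hK)
    (by exact_mod_cast (cubeSlice_nonempty hK.le).card_pos)
  have hN : (0 : ℝ) < Fintype.card ι := by exact_mod_cast (Nat.zero_le K).trans_lt hK
  have hterm : ∀ x, |∑ φ ∈ cubeSlice ι K with φ x = false, F (update φ x true) -
      ∑ φ ∈ cubeSlice ι K with φ x = false, F φ| ≤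
        #{φ ∈ cubeSlice ι K | φ x = false} * L x := by
    intro x
    rw [← sum_sub_distrib, ← nsmul_eq_mul, ← sum_const]
    refine (abs_sum_le_sum_abs _ _).trans (sum_le_sum fun φ hφ => ?_)
    simpa [update_eq_self_iff (f := φ) |>.2 (mem_filter.1 hφ).2.symm] using hF φ x
  rw [sliceAvg_succ_eq_sum_update, sliceAvg_eq_sum_filter_false hK, ← sub_div,
    ← sum_sub_distrib, abs_div, abs_of_pos hP, div_le_div_iff₀ hP hN]
  calc _ ≤ (∑ x, #{φ ∈ cubeSlice ι K | φ x = false} * L x) * Fintype.card ι :=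
        mul_le_mul_of_nonneg_right
          ((abs_sum_le_sum_abs _ _).trans (sum_le_sum fun x _ => hterm x)) hN.le
    _ = ∑ x, (Fintype.card ι * #{φ ∈ cubeSlice ι K | φ x = false}) * L x := by
        rw [sum_mul]; exact sum_congr rfl fun x _ => by ring
    _ = (∑ x, L x) * P := by
        simp_rw [card_mul_card_filter_eq_false]
        rw [← mul_sum, mul_comm]

theorem abs_sliceAvg_add_sub_le (F : (ι → Bool) → ℝ) (L : ι → ℝ)
    (hF : ∀ φ x, |F (update φ x true) - F (update φ x false)| ≤ L x) {K : ℕ} :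
    ∀ {d : ℕ}, K + d ≤ Fintype.card ι →
      |sliceAvg (K + d) F - sliceAvg K F| ≤ d * ((∑ x, L x) / Fintype.card ι)
  | 0, _ => by simp
  | d + 1, hd => by
    calc |sliceAvg (K + (d + 1)) F - sliceAvg K F|
        ≤ |sliceAvg (K + d + 1) F - sliceAvg (K + d) F| + |sliceAvg (K + d) F - sliceAvg K F| :=
          abs_sub_le _ _ _
      _ ≤ (∑ x, L x) / Fintype.card ι + d * ((∑ x, L x) / Fintype.card ι) :=
          add_le_add (abs_sliceAvg_succ_sub_le (by omega) F L hF)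
            (abs_sliceAvg_add_sub_le F L hF (by omega))
      _ = (d + 1 : ℕ) * ((∑ x, L x) / Fintype.card ι) := by push_cast; ring

theorem abs_sliceAvg_sub_le (F : (ι → Bool) → ℝ) (L : ι → ℝ)
    (hF : ∀ φ x, |F (update φ x true) - F (update φ x false)| ≤ L x) {K K' : ℕ}
    (hK : K ≤ Fintype.card ι) (hK' : K' ≤ Fintype.card ι) :
    |sliceAvg K' F - sliceAvg K F| ≤ |(K' : ℝ) - K| * ((∑ x, L x) / Fintype.card ι) := by
  rcases le_total K K' with h | h
  · obtain ⟨d, rfl⟩ := Nat.exists_eq_add_of_le h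
    simpa using abs_sliceAvg_add_sub_le F L hF hK'
  · obtain ⟨d, rfl⟩ := Nat.exists_eq_add_of_le h
    rw [abs_sub_comm, abs_sub_comm (K' : ℝ)]
    simpa using abs_sliceAvg_add_sub_le F L hF hK

end Slice

theorem sum_mul_eq_sum_mul_fiberAvg {β γ : Type*} [Fintype β] [DecidableEq γ] (c : β → γ)
    (w F : β → ℝ) (hw : ∀ a b, c a = c b → w a = w b) :
    ∑ b, w b * F b = ∑ b, w b * ((∑ b' with c b' = c b, F b') / #{b' | c b' = c b}) := by
  have hc : ∀ b ∈ (univ : Finset β), c b ∈ univ.image c :=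
    fun b _ => mem_image_of_mem c (mem_univ b)
  rw [← sum_fiberwise_of_maps_to hc, ← sum_fiberwise_of_maps_to hc]
  refine sum_congr rfl fun k hk => ?_
  obtain ⟨b₀, -, rfl⟩ := mem_image.1 hk
  have hfib : ∀ b ∈ ({b | c b = c b₀} : Finset β), w b = w b₀ :=
    fun b hb => hw b b₀ (mem_filter.1 hb).2
  have hne : (#{b | c b = c b₀} : ℝ) ≠ 0 := by
    exact_mod_cast (card_pos.2 ⟨b₀, by simp⟩).ne'
  calc (∑ b with c b = c b₀, w b * F b) = w b₀ * ∑ b with c b = c b₀, F b := by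
        rw [mul_sum]
        refine sum_congr rfl fun b hb => ?_
        rw [hfib b hb]
    _ = ∑ b with c b = c b₀, w b * ((∑ b' with c b' = c b, F b') / #{b' | c b' = c b}) := by
        have h : ∀ b ∈ ({b | c b = c b₀} : Finset β),
            w b * ((∑ b' with c b' = c b, F b') / #{b' | c b' = c b}) =
              w b₀ * ((∑ b' with c b' = c b₀, F b') / #{b' | c b' = c b₀}) :=
          fun b hb => by rw [hfib b hb, (mem_filter.1 hb).2]
        rw [sum_congr rfl h, sum_const, nsmul_eq_mul]
        field_simp

section ProductWeights

variable {ι α : Type*} [Fintype ι] [DecidableEq ι] [Fintype α]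

theorem sum_prod_eq_one {ν : α → ℝ} (hν : ∑ a, ν a = 1) :
    ∑ φ : ι → α, ∏ x, ν (φ x) = 1 := by
  rw [← Fintype.prod_sum (fun _ => ν), hν, prod_const_one]

theorem sum_prod_mul_mul {ν : α → ℝ} (hν : ∑ a, ν a = 1) (g : α → ℝ) (x y : ι) :
    ∑ φ : ι → α, (∏ z, ν (φ z)) * (g (φ x) * g (φ y)) =
      if x = y then ∑ a, ν a * g a ^ 2 else (∑ a, ν a * g a) ^ 2 := by
  let u : ι → α → ℝ := fun z a => ν a * (if z = x then g a else 1) * (if z = y then g a else 1)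
  have hu : ∀ φ : ι → α, ∏ z, u z (φ z) = (∏ z, ν (φ z)) * (g (φ x) * g (φ y)) := by
    intro φ
    simp only [u, prod_mul_distrib, Fintype.prod_ite_eq', mul_assoc]
  simp_rw [← hu, ← Fintype.prod_sum u]
  split_ifs with hxy
  · subst hxy
    rw [← Fintype.prod_ite_eq' x fun _ => ∑ a, ν a * g a ^ 2]
    refine prod_congr rfl fun z _ => ?_
    by_cases hz : z = x
    · simp [u, hz, sq, mul_assoc]
    · simp [u, hz, hν]
  · have h : ∀ z, ∑ a, u z a =
        (if z = x then ∑ a, ν a * g a else 1) * (if z = y then ∑ a, ν a * g a else 1) := by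
      intro z
      by_cases hzx : z = x
      · subst hzx; simp [u, hxy]
      · by_cases hzy : z = y
        · subst hzy; simp [u, hzx]
        · simp [u, hzx, hzy, hν]
    simp_rw [h, prod_mul_distrib, Fintype.prod_ite_eq', sq]

theorem sum_prod_mul_sum_sq {ν g : α → ℝ} (hν : ∑ a, ν a = 1) (hg : ∑ a, ν a * g a = 0) :
    ∑ φ : ι → α, (∏ x, ν (φ x)) * (∑ x, g (φ x)) ^ 2 =
      Fintype.card ι * ∑ a, ν a * g a ^ 2 := by
  simp_rw [sq (∑ x, _), sum_mul_sum, mul_sum]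
  rw [sum_comm]
  simp_rw [sum_comm (γ := ι → α), sum_prod_mul_mul hν, hg]
  simp [mul_sum]

end ProductWeights

theorem sum_mul_abs_le_sqrt_sum_mul_sq {β : Type*} (s : Finset β) {w X : β → ℝ}
    (hw : ∀ b ∈ s, 0 ≤ w b) (hw₁ : ∑ b ∈ s, w b = 1) :
    ∑ b ∈ s, w b * |X b| ≤ √(∑ b ∈ s, w b * X b ^ 2) := by
  refine (le_abs_self _).trans (Real.abs_le_sqrt ?_)
  have h := sum_sq_le_sum_mul_sum_of_sq_le_mul s hw
    (fun b hb => mul_nonneg (hw b hb) (sq_nonneg (X b))) (r := fun b => w b * |X b|)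
    (fun b _ => le_of_eq (by rw [mul_pow, sq_abs]; ring))
  rwa [hw₁, one_mul] at h

section Spin

@[simp] theorem spin_true : spin true = 1 := rfl

@[simp] theorem spin_false : spin false = -1 := rfl

noncomputable def spinWeight (m : ℝ) (b : Bool) : ℝ := (1 + m * spin b) / 2

theorem sum_spinWeight (m : ℝ) : ∑ b, spinWeight m b = 1 := by
  simp only [Fintype.sum_bool, spinWeight, spin_true, spin_false]
  ring

theorem spinWeight_nonneg {m : ℝ} (hm : m ∈ Set.Icc (-1 : ℝ) 1) (b : Bool) :
    0 ≤ spinWeight m b := by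
  obtain ⟨h₁, h₂⟩ := hm
  cases b <;> simp only [spinWeight, spin_true, spin_false] <;> linarith

theorem exp_neg_artanh_neg_mul_spin {m : ℝ} (hm : m ∈ Set.Ioo (-1 : ℝ) 1) (b : Bool) :
    Real.exp (-artanh (-m) * spin b) = spinWeight m b * (2 / √(1 - m ^ 2)) := by
  obtain ⟨h₁, h₂⟩ := hm
  have hp : 0 < 1 + m := by linarith
  have hq : 0 < 1 - m := by linarith
  have hsq : √(1 - m ^ 2) ^ 2 = (1 + m) * (1 - m) := by
    rw [Real.sq_sqrt (by nlinarith)]; ring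
  have hL : -artanh (-m) = Real.log ((1 + m) / (1 - m)) / 2 := by
    rw [artanh, ← neg_div, ← Real.log_inv, inv_div]
    ring_nf
  rw [hL]
  cases b
  · rw [spin_false, mul_neg_one, ← neg_div, Real.exp_half, ← Real.log_inv, inv_div,
      Real.exp_log (by positivity), Real.sqrt_eq_iff_eq_sq (by positivity)
        (mul_nonneg (spinWeight_nonneg ⟨h₁.le, h₂.le⟩ _) (by positivity))]
    simp only [spinWeight, spin_false, mul_pow, div_pow, hsq]
    field_simp
    ring
  · rw [spin_true, mul_one, Real.exp_half, Real.exp_log (by positivity),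
      Real.sqrt_eq_iff_eq_sq (by positivity)
        (mul_nonneg (spinWeight_nonneg ⟨h₁.le, h₂.le⟩ _) (by positivity))]
    simp only [spinWeight, spin_true, mul_pow, div_pow, hsq]
    field_simp

end Spin

theorem mag_eq_two_mul_trueCount_sub {N : ℕ} (φ : Fin N → Bool) :
    mag φ = 2 * trueCount φ - N := by
  have h : ∀ x, (if φ x then (1 : ℝ) else -1) = 2 * (if φ x = true then 1 else 0) - 1 := by
    intro x; cases φ x <;> norm_num
  rw [mag, sum_congr rfl fun x _ => h x, sum_sub_distrib, ← mul_sum, trueCount,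
    natCast_card_filter]
  simp

theorem canExp_sliceAvg_trueCount {N : ℕ} (μ : ℝ) (F : (Fin N → Bool) → ℝ) :
    canExp N μ (fun φ => sliceAvg (trueCount φ) F) = canExp N μ F := by
  rw [canExp, canExp, sum_mul_eq_sum_mul_fiberAvg trueCount _ F fun a b hab => by
    rw [mag_eq_two_mul_trueCount_sub, mag_eq_two_mul_trueCount_sub, hab]]
  rfl

theorem mcExp_eq_sliceAvg {N : ℕ} (hN : 0 < N) {m : ℝ} {φ₀ : Fin N → Bool}
    (hφ₀ : mag φ₀ / N = m) (F : (Fin N → Bool) → ℝ) : mcExp N m F = sliceAvg (trueCount φ₀) F := by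
  have hslice : magSet N m = cubeSlice (Fin N) (trueCount φ₀) := by
    ext φ
    have hN' : (N : ℝ) ≠ 0 := by positivity
    simp only [magSet, mem_filter, mem_univ, true_and, mem_cubeSlice, ← hφ₀,
      mag_eq_two_mul_trueCount_sub, div_left_inj' hN']
    constructor <;> intro h
    · exact_mod_cast (by linarith : (trueCount φ : ℝ) = trueCount φ₀)
    · rw [h]
  rw [mcExp, sliceAvg, hslice]

theorem mag_eq_sum_spin {N : ℕ} (φ : Fin N → Bool) : mag φ = ∑ x, spin (φ x) := rfl

theorem canExp_eq_sum_prod {N : ℕ} {μ c : ℝ} {ν : Bool → ℝ} (hc : c ≠ 0) (hν : ∑ b, ν b = 1)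
    (hexp : ∀ b, Real.exp (-μ * spin b) = ν b * c) (F : (Fin N → Bool) → ℝ) :
    canExp N μ F = ∑ φ, (∏ x, ν (φ x)) * F φ := by
  have hw : ∀ φ : Fin N → Bool, Real.exp (-μ * mag φ) = c ^ N * ∏ x, ν (φ x) := by
    intro φ
    rw [mag_eq_sum_spin, mul_sum, Real.exp_sum]
    simp_rw [hexp, prod_mul_distrib, prod_const, card_univ, Fintype.card_fin, mul_comm]
  have hZ : Zcan N μ = c ^ N := by
    rw [Zcan, sum_congr rfl fun φ _ => hw φ, ← mul_sum, sum_prod_eq_one hν, mul_one]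
  rw [canExp, hZ, sum_div]
  refine sum_congr rfl fun φ _ => ?_
  rw [hw]
  field_simp

theorem canExp_artanh_eq {N : ℕ} {m : ℝ} (hm : m ∈ Set.Ioo (-1 : ℝ) 1)
    (F : (Fin N → Bool) → ℝ) :
    canExp N (artanh (-m)) F = ∑ φ, (∏ x, spinWeight m (φ x)) * F φ := by
  have hc : 2 / √(1 - m ^ 2) ≠ 0 := by
    have : 0 < 1 - m ^ 2 := by nlinarith [hm.1, hm.2]
    positivity
  exact canExp_eq_sum_prod hc (sum_spinWeight m) (exp_neg_artanh_neg_mul_spin hm) F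

theorem sum_prod_spinWeight_mul_sq {N : ℕ} (m : ℝ) :
    ∑ φ : Fin N → Bool, (∏ x, spinWeight m (φ x)) * (mag φ - N * m) ^ 2 = N * (1 - m ^ 2) := by
  have hmag : ∀ φ : Fin N → Bool, mag φ - N * m = ∑ x, (spin (φ x) - m) := by
    intro φ
    simp [mag_eq_sum_spin, sum_sub_distrib]
  simp_rw [hmag]
  rw [sum_prod_mul_sum_sq (g := fun b => spin b - m) (sum_spinWeight m), Fintype.card_fin]
  · simp only [Fintype.sum_bool, spinWeight, spin_true, spin_false]
    ring
  · simp only [Fintype.sum_bool, spinWeight, spin_true, spin_false]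
    ring

theorem abs_canExp_artanh_sub_le {N : ℕ} {m : ℝ} (hm : m ∈ Set.Ioo (-1 : ℝ) 1)
    (G : (Fin N → Bool) → ℝ) (c κ : ℝ) (hκ : 0 ≤ κ)
    (hG : ∀ φ, |G φ - c| ≤ κ * |mag φ - N * m|) :
    |canExp N (artanh (-m)) G - c| ≤ κ * √(N * (1 - m ^ 2)) := by
  set π : (Fin N → Bool) → ℝ := fun φ => ∏ x, spinWeight m (φ x)
  have hπ : ∀ φ ∈ univ, 0 ≤ π φ :=
    fun φ _ => prod_nonneg fun x _ => spinWeight_nonneg ⟨hm.1.le, hm.2.le⟩ _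
  have hπ₁ : ∑ φ, π φ = 1 := sum_prod_eq_one (sum_spinWeight m)
  rw [canExp_artanh_eq hm, ← sum_prod_spinWeight_mul_sq m]
  calc |∑ φ, π φ * G φ - c| = |∑ φ, π φ * (G φ - c)| := by
        simp_rw [mul_sub, sum_sub_distrib, ← sum_mul, hπ₁, one_mul]
    _ ≤ ∑ φ, π φ * |G φ - c| := by
        refine (abs_sum_le_sum_abs _ _).trans (sum_le_sum fun φ hφ => ?_)
        rw [abs_mul, abs_of_nonneg (hπ φ hφ)]
    _ ≤ ∑ φ, π φ * (κ * |mag φ - N * m|) :=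
        sum_le_sum fun φ hφ => mul_le_mul_of_nonneg_left (hG φ) (hπ φ hφ)
    _ = κ * ∑ φ, π φ * |mag φ - N * m| := by
        rw [mul_sum]; exact sum_congr rfl fun φ _ => by ring
    _ ≤ κ * √(∑ φ, π φ * (mag φ - N * m) ^ 2) :=
        mul_le_mul_of_nonneg_left (sum_mul_abs_le_sqrt_sum_mul_sq _ hπ hπ₁) hκ

theorem sum_orderIsoOfFin {N n : ℕ} (I : Finset (Fin N)) (h : I.card = n) (H : Fin N → ℝ) :
    ∑ j, H (I.orderIsoOfFin h j) = ∑ x ∈ I, H x := by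
  rw [← sum_coe_sort I H]
  exact Equiv.sum_comp (I.orderIsoOfFin h).toEquiv fun x => H x

theorem abs_comp_projB_update_sub_le {N n : ℕ} (I : Finset (Fin N)) (h : I.card = n)
    {f : (Fin n → Bool) → ℝ}
    (hf : ∀ a b : Fin n → Bool, |f a - f b| ≤ ∑ j, |spin (a j) - spin (b j)|)
    (φ : Fin N → Bool) (x : Fin N) :
    |f (projB I h (update φ x true)) - f (projB I h (update φ x false))| ≤
      if x ∈ I then 2 else 0 := by
  have hx : ∀ y, |spin (update φ x true y) - spin (update φ x false y)| =
      if y = x then 2 else 0 := by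
    intro y
    by_cases hy : y = x
    · subst hy; norm_num
    · simp [hy]
  refine (hf _ _).trans (le_of_eq ?_)
  simp only [projB]
  rw [sum_orderIsoOfFin I h fun y => |spin (update φ x true y) - spin (update φ x false y)|]
  simp_rw [hx, sum_ite_eq']

theorem abs_sliceAvg_comp_projB_sub_le {N n : ℕ} (I : Finset (Fin N)) (h : I.card = n)
    {f : (Fin n → Bool) → ℝ}
    (hf : ∀ a b : Fin n → Bool, |f a - f b| ≤ ∑ j, |spin (a j) - spin (b j)|)
    (φ ψ : Fin N → Bool) :
    |sliceAvg (trueCount φ) (fun χ => f (projB I h χ)) -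
        sliceAvg (trueCount ψ) (fun χ => f (projB I h χ))| ≤ n / N * |mag φ - mag ψ| := by
  have hL : ∑ x : Fin N, (if x ∈ I then (2 : ℝ) else 0) = 2 * n := by
    rw [sum_ite_mem, univ_inter, sum_const, h, nsmul_eq_mul, mul_comm]
  have hlip := abs_sliceAvg_sub_le (fun χ => f (projB I h χ)) (fun x => if x ∈ I then 2 else 0)
    (abs_comp_projB_update_sub_le I h hf) (trueCount_le_card ψ) (trueCount_le_card φ)
  rw [hL, Fintype.card_fin] at hlip
  refine hlip.trans (le_of_eq ?_)
  rw [mag_eq_two_mul_trueCount_sub, mag_eq_two_mul_trueCount_sub,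
    show ∀ a b : ℝ, 2 * a - N - (2 * b - N) = 2 * (a - b) by intros; ring, abs_mul, abs_two]
  ring

theorem div_mul_sqrt_mul_le {n N : ℝ} (hn : 0 ≤ n) (hnN : n < N) (s : ℝ) :
    n / N * √(N * s) ≤ n / (1 - n / N) * √s / √N := by
  have hN : 0 < N := hn.trans_lt hnN
  have hsN : 0 < √N := Real.sqrt_pos.2 hN
  rw [Real.sqrt_mul hN.le, mul_div_assoc]
  calc n / N * (√N * √s) = n * (√s / √N) := by
        field_simp
        rw [Real.sq_sqrt hN.le]
    _ ≤ n / (1 - n / N) * (√s / √N) := by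
        refine mul_le_mul_of_nonneg_right (le_div_self hn ?_ ?_) (by positivity)
        · linarith [(div_lt_one hN).2 hnN]
        · linarith [div_nonneg hn hN.le]

theorem stmt8_general (m : ℝ) (hm : m ∈ Set.Ioo (-1 : ℝ) 1)
    (n : ℕ) (f : (Fin n → Bool) → ℝ)
    -- `f` is 1-Lipschitz with respect to the ℓ¹-norm on `ℝ^n` (via the spin embedding)
    (hfL : ∀ a b : Fin n → Bool, |f a - f b| ≤ ∑ j, |spin (a j) - spin (b j)|) :
    ∀ N : ℕ, n < N → ∀ I : Finset (Fin N), ∀ h : I.card = n,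
      (∃ φ : Fin N → Bool, mag φ / N = m) →
        |mcExp N m (fun φ => f (projB I h φ)) -
            canExp N (artanh (-m)) (fun φ => f (projB I h φ))| ≤
          ((n : ℝ) / (1 - (n : ℝ) / N)) * Real.sqrt (1 - m ^ 2) / Real.sqrt N := by
  intro N hnN I h ⟨φ₀, hφ₀⟩
  have hN : 0 < N := (Nat.zero_le n).trans_lt hnN
  have hmag₀ : mag φ₀ = N * m := by
    rw [← hφ₀, mul_div_cancel₀ _ (by exact_mod_cast hN.ne')]
  rw [mcExp_eq_sliceAvg hN hφ₀, ← canExp_sliceAvg_trueCount, abs_sub_comm]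
  refine (abs_canExp_artanh_sub_le hm _ _ (n / N) (by positivity) fun φ => ?_).trans ?_
  · simpa only [hmag₀] using abs_sliceAvg_comp_projB_sub_le I h hfL φ φ₀
  · exact div_mul_sqrt_mul_le (Nat.cast_nonneg n) (by exact_mod_cast hnN) _

theorem stmt8 (m : ℝ) (hm : m ∈ Set.Ioo (-1 : ℝ) 1)
    (n : ℕ) (hn : 0 < n) (f : (Fin n → Bool) → ℝ)
    -- `f` is bounded
    (hfB : ∃ C, ∀ a, |f a| ≤ C)
    -- `f` is 1-Lipschitz with respect to the ℓ¹-norm on `ℝ^n` (via the spin embedding)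
    (hfL : ∀ a b : Fin n → Bool, |f a - f b| ≤ ∑ j, |spin (a j) - spin (b j)|) :
    ∀ N : ℕ, n < N → ∀ I : Finset (Fin N), ∀ h : I.card = n,
      (∃ φ : Fin N → Bool, mag φ / N = m) →
        |mcExp N m (fun φ => f (projB I h φ)) -
            canExp N (artanh (-m)) (fun φ => f (projB I h φ))| ≤
          ((n : ℝ) / (1 - (n : ℝ) / N)) * Real.sqrt (1 - m ^ 2) / Real.sqrt N :=
  stmt8_general m hm n f hfL
end

section
/- Let N ∈ ℕ with N ≥ 2, ρ > 0, and m, m' ∈ (−√ρ, √ρ). Then the specific 2-norm fluctuation distance between the auxiliary microcanonical ensembles satisfies w₂(μ_MC^{m,ρ;N}, μ_MC^{m',ρ;N}; N) ≤ (1 + 2/√(1 − m²/ρ)) · |m − m'|. -/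
open MeasureTheory ProbabilityTheory Matrix

/-- The specific `p`-norm fluctuation distance `w_p(μ₁, μ₂; N)`:
the infimum over all couplings `γ` of `μ₁` and `μ₂` of
`∫ (1/N) ∑ᵢ |xᵢ - yᵢ|^p dγ`, raised to the power `1/p`. -/
noncomputable def fluctDist (p : ℝ) (N : ℕ) (μ₁ μ₂ : Measure (Fin N → ℝ)) : ℝ :=
  sInf {c : ℝ | ∃ γ : Measure ((Fin N → ℝ) × (Fin N → ℝ)), IsProbabilityMeasure γ ∧
      γ.map Prod.fst = μ₁ ∧ γ.map Prod.snd = μ₂ ∧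
      c = ∫ xy, (N : ℝ)⁻¹ * ∑ i, |xy.1 i - xy.2 i| ^ p ∂γ} ^ (1 / p)

/-- The standard Gaussian measure on `ℝ^N`. -/
noncomputable def stdGaussian (N : ℕ) : Measure (Fin N → ℝ) :=
  Measure.pi fun _ => gaussianReal 0 1

/-- `U` is an orthogonal matrix such that the first coordinate of `U x` is
`N^{-1/2} ∑ᵢ xᵢ`. -/
def GoodRotation {N : ℕ} (hN : 0 < N) (U : Matrix (Fin N) (Fin N) ℝ) : Prop :=
  Uᵀ * U = 1 ∧ ∀ x : Fin N → ℝ, U.mulVec x ⟨0, hN⟩ = (∑ i, x i) / Real.sqrt N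

/-- The auxiliary microcanonical ensemble `μ_MC^{m,ρ;N}` with magnetization density `m` and
particle density `ρ`: the pushforward under `U⁻¹` of the product of the Dirac mass at `m √N`
in the first coordinate with the uniform probability measure on the sphere of radius
`√(N(ρ − m²))` in the remaining `N − 1` coordinates.  The uniform sphere measure is realized
as the pushforward of the standard Gaussian on the remaining coordinates under radial
normalization. -/
noncomputable def mcSpherical {N : ℕ} (hN : 0 < N) (U : Matrix (Fin N) (Fin N) ℝ)
    (m ρ : ℝ) : Measure (Fin N → ℝ) :=
  (stdGaussian N).map fun x =>
    U⁻¹.mulVec fun i =>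
      if i = ⟨0, hN⟩ then m * Real.sqrt N
      else Real.sqrt (N * (ρ - m ^ 2)) * x i /
        Real.sqrt (∑ j ∈ Finset.univ.filter (fun j => j ≠ (⟨0, hN⟩ : Fin N)), x j ^ 2)

/-! Couple the two ensembles synchronously, pushing one Gaussian sample through both
normalisation maps. Before the rotation `U⁻¹`, which is an isometry, the two points differ by
`(m - m')√N` along the first axis and by `√N (√(ρ - m²) - √(ρ - m'²))` times a vector of norm
at most `1` orthogonal to it. Hence `w₂² ≤ (m - m')² + (√(ρ - m²) - √(ρ - m'²))²`, and
`|√(ρ - m²) - √(ρ - m'²)| ≤ |m² - m'²| / √(ρ - m²) ≤ 2√ρ |m - m'| / √(ρ - m²)`. -/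

open Finset

lemma sum_sq_mulVec_of_transpose_mul_self {ι : Type*} [Fintype ι] [DecidableEq ι]
    {A : Matrix ι ι ℝ} (hA : Aᵀ * A = 1) (w : ι → ℝ) : ∑ i, (A *ᵥ w) i ^ 2 = ∑ i, w i ^ 2 := by
  have h : (A *ᵥ w) ᵥ* A = w := by
    rw [← mulVec_transpose, mulVec_mulVec, hA, one_mulVec]
  simpa only [dotProduct, sq, h] using dotProduct_mulVec (A *ᵥ w) A w

lemma inv_transpose_mul_inv_of_transpose_mul_self {ι : Type*} [Fintype ι] [DecidableEq ι]
    {U : Matrix ι ι ℝ} (hU : Uᵀ * U = 1) : (U⁻¹)ᵀ * U⁻¹ = 1 := by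
  rw [inv_eq_left_inv hU, transpose_transpose, mul_eq_one_comm.mp hU]

lemma abs_sqrt_sub_sqrt_le {x y : ℝ} (hx : 0 < x) (hy : 0 ≤ y) :
    |√x - √y| ≤ |x - y| / √x := by
  have hsx : 0 < √x := Real.sqrt_pos.mpr hx
  have hprod : (√x - √y) * (√x + √y) = x - y := by
    rw [mul_comm, ← sq_sub_sq, Real.sq_sqrt hx.le, Real.sq_sqrt hy]
  rw [le_div_iff₀ hsx, ← hprod, abs_mul, abs_of_nonneg (by positivity : 0 ≤ √x + √y)]
  gcongr
  exact le_add_of_nonneg_right (Real.sqrt_nonneg y)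

lemma abs_sq_sub_sq_le {a b r : ℝ} (ha : |a| ≤ r) (hb : |b| ≤ r) :
    |a ^ 2 - b ^ 2| ≤ 2 * r * |a - b| := by
  rw [sq_sub_sq, abs_mul]
  gcongr
  linarith [abs_add_le a b]

lemma sqrt_sq_add_sq_le (a b : ℝ) : √(a ^ 2 + b ^ 2) ≤ |a| + |b| := by
  rw [Real.sqrt_le_left (by positivity)]
  nlinarith [sq_abs a, sq_abs b, abs_nonneg a, abs_nonneg b]

lemma fluctDist_le_rpow_integral {p : ℝ} (hp : 0 ≤ p) {N : ℕ} {μ₁ μ₂ : Measure (Fin N → ℝ)}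
    (γ : Measure ((Fin N → ℝ) × (Fin N → ℝ))) [IsProbabilityMeasure γ]
    (h₁ : γ.map Prod.fst = μ₁) (h₂ : γ.map Prod.snd = μ₂) :
    fluctDist p N μ₁ μ₂ ≤ (∫ xy, (N : ℝ)⁻¹ * ∑ i, |xy.1 i - xy.2 i| ^ p ∂γ) ^ (1 / p) := by
  have hlower : ∀ c ∈ {c : ℝ | ∃ γ : Measure ((Fin N → ℝ) × (Fin N → ℝ)),
      IsProbabilityMeasure γ ∧ γ.map Prod.fst = μ₁ ∧ γ.map Prod.snd = μ₂ ∧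
      c = ∫ xy, (N : ℝ)⁻¹ * ∑ i, |xy.1 i - xy.2 i| ^ p ∂γ}, 0 ≤ c := by
    rintro c ⟨γ', -, -, -, rfl⟩
    exact integral_nonneg fun xy => by positivity
  exact Real.rpow_le_rpow (Real.sInf_nonneg hlower)
    (csInf_le ⟨0, hlower⟩ ⟨γ, inferInstance, h₁, h₂, rfl⟩) (one_div_nonneg.mpr hp)

lemma fluctDist_map_le {p : ℝ} (hp : 0 ≤ p) {N : ℕ} {α : Type*} [MeasurableSpace α]
    (ν : Measure α) [IsProbabilityMeasure ν] {f g : α → Fin N → ℝ}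
    (hf : Measurable f) (hg : Measurable g) {c : ℝ}
    (hc : ∀ x, (N : ℝ)⁻¹ * ∑ i, |f x i - g x i| ^ p ≤ c) :
    fluctDist p N (ν.map f) (ν.map g) ≤ c ^ (1 / p) := by
  have hF : Measurable fun x => (f x, g x) := hf.prodMk hg
  have : IsProbabilityMeasure (ν.map fun x => (f x, g x)) :=
    Measure.isProbabilityMeasure_map hF.aemeasurable
  refine (fluctDist_le_rpow_integral hp _ (by rw [Measure.map_map measurable_fst hF]; rfl)
    (by rw [Measure.map_map measurable_snd hF]; rfl)).trans ?_
  rw [integral_map hF.aemeasurable (by fun_prop)]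
  refine Real.rpow_le_rpow (integral_nonneg fun x => by positivity) ?_ (one_div_nonneg.mpr hp)
  simpa using integral_mono_of_nonneg (ae_of_all _ fun x => by positivity)
    (integrable_const (μ := ν) c) (ae_of_all _ hc)

instance isProbabilityMeasure_stdGaussian (N : ℕ) : IsProbabilityMeasure (stdGaussian N) := by
  unfold _root_.stdGaussian; infer_instance

noncomputable def mcPoint {N : ℕ} (hN : 0 < N) (m ρ : ℝ) (x : Fin N → ℝ) : Fin N → ℝ :=
  fun i => if i = ⟨0, hN⟩ then m * √N
    else √(N * (ρ - m ^ 2)) * x i /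
      √(∑ j ∈ univ.filter (fun j => j ≠ (⟨0, hN⟩ : Fin N)), x j ^ 2)

lemma mcSpherical_eq_map {N : ℕ} (hN : 0 < N) (U : Matrix (Fin N) (Fin N) ℝ) (m ρ : ℝ) :
    mcSpherical hN U m ρ = (stdGaussian N).map (fun x => U⁻¹ *ᵥ mcPoint hN m ρ x) := rfl

@[fun_prop]
lemma measurable_mcPoint {N : ℕ} (hN : 0 < N) (m ρ : ℝ) : Measurable (mcPoint hN m ρ) := by
  refine measurable_pi_lambda _ fun i => ?_
  by_cases h : i = ⟨0, hN⟩ <;> simp only [mcPoint, h, if_true, if_false] <;> fun_prop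

lemma mcPoint_self {N : ℕ} (hN : 0 < N) (m ρ : ℝ) (x : Fin N → ℝ) :
    mcPoint hN m ρ x ⟨0, hN⟩ = m * √N := if_pos rfl

lemma mcPoint_of_ne {N : ℕ} (hN : 0 < N) (m ρ : ℝ) (x : Fin N → ℝ) {i : Fin N}
    (hi : i ≠ ⟨0, hN⟩) :
    mcPoint hN m ρ x i = √N * √(ρ - m ^ 2) * (x i / √(∑ j ∈ univ.erase ⟨0, hN⟩, x j ^ 2)) := by
  rw [mcPoint, if_neg hi, filter_ne', Real.sqrt_mul (Nat.cast_nonneg N), mul_div_assoc]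

lemma sum_sq_sub_mcPoint_le {N : ℕ} (hN : 0 < N) (m m' ρ : ℝ) (x : Fin N → ℝ) :
    ∑ i, (mcPoint hN m ρ x i - mcPoint hN m' ρ x i) ^ 2 ≤
      N * ((m - m') ^ 2 + (√(ρ - m ^ 2) - √(ρ - m' ^ 2)) ^ 2) := by
  have hsqrtN : √(N : ℝ) ^ 2 = N := Real.sq_sqrt (Nat.cast_nonneg N)
  have hS : √(∑ j ∈ univ.erase ⟨0, hN⟩, x j ^ 2) ^ 2 = ∑ j ∈ univ.erase ⟨0, hN⟩, x j ^ 2 :=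
    Real.sq_sqrt (sum_nonneg fun j _ => sq_nonneg (x j))
  calc ∑ i, (mcPoint hN m ρ x i - mcPoint hN m' ρ x i) ^ 2
      = N * (m - m') ^ 2 + N * (√(ρ - m ^ 2) - √(ρ - m' ^ 2)) ^ 2 *
          ∑ i ∈ univ.erase ⟨0, hN⟩, (x i / √(∑ j ∈ univ.erase ⟨0, hN⟩, x j ^ 2)) ^ 2 := by
        rw [← add_sum_erase _ _ (mem_univ ⟨0, hN⟩), mcPoint_self, mcPoint_self, mul_sum]
        congr 1
        · rw [← sub_mul, mul_pow, hsqrtN, mul_comm]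
        · refine sum_congr rfl fun i hi => ?_
          have hi₀ := ne_of_mem_erase hi
          rw [mcPoint_of_ne hN m ρ x hi₀, mcPoint_of_ne hN m' ρ x hi₀, ← sub_mul, ← mul_sub,
            mul_pow, mul_pow, hsqrtN]
    _ ≤ N * (m - m') ^ 2 + N * (√(ρ - m ^ 2) - √(ρ - m' ^ 2)) ^ 2 * 1 := by
        gcongr
        -- equality unless `x` vanishes off the first coordinate, where division by zero gives `0`
        simp_rw [div_pow, hS]
        rw [← sum_div]
        exact div_self_le_one _
    _ = N * ((m - m') ^ 2 + (√(ρ - m ^ 2) - √(ρ - m' ^ 2)) ^ 2) := by ring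

lemma abs_sqrt_sub_sq_sub_sqrt_sub_sq_le {ρ m m' : ℝ} (hρ : 0 < ρ) (hm : |m| < √ρ)
    (hm' : |m'| ≤ √ρ) :
    |√(ρ - m ^ 2) - √(ρ - m' ^ 2)| ≤ 2 / √(1 - m ^ 2 / ρ) * |m - m'| := by
  have hm2 : m ^ 2 < ρ := sq_abs m ▸ (Real.lt_sqrt (abs_nonneg m)).mp hm
  have hm'2 : m' ^ 2 ≤ ρ := sq_abs m' ▸ (Real.le_sqrt (abs_nonneg m') hρ.le).mp hm'
  calc |√(ρ - m ^ 2) - √(ρ - m' ^ 2)|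
      ≤ |(ρ - m ^ 2) - (ρ - m' ^ 2)| / √(ρ - m ^ 2) :=
        abs_sqrt_sub_sqrt_le (by linarith) (by linarith)
    _ = |m' ^ 2 - m ^ 2| / √(ρ - m ^ 2) := by ring_nf
    _ ≤ 2 * √ρ * |m' - m| / √(ρ - m ^ 2) := by gcongr; exact abs_sq_sub_sq_le hm' hm.le
    _ = 2 / √(1 - m ^ 2 / ρ) * |m - m'| := by
        rw [abs_sub_comm, one_sub_div hρ.ne', Real.sqrt_div' _ hρ.le, div_div_eq_mul_div]
        ring

lemma mcCost_le {N : ℕ} (hN : 0 < N) {U : Matrix (Fin N) (Fin N) ℝ} (hU : Uᵀ * U = 1)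
    (m m' ρ : ℝ) (x : Fin N → ℝ) :
    (N : ℝ)⁻¹ * ∑ i, |(U⁻¹ *ᵥ mcPoint hN m ρ x) i - (U⁻¹ *ᵥ mcPoint hN m' ρ x) i| ^ (2 : ℝ) ≤
      (m - m') ^ 2 + (√(ρ - m ^ 2) - √(ρ - m' ^ 2)) ^ 2 := by
  simp_rw [Real.rpow_two, sq_abs, ← Pi.sub_apply, ← mulVec_sub,
    sum_sq_mulVec_of_transpose_mul_self (inv_transpose_mul_inv_of_transpose_mul_self hU),
    Pi.sub_apply]
  rw [inv_mul_le_iff₀ (by exact_mod_cast hN)]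
  exact sum_sq_sub_mcPoint_le hN m m' ρ x

theorem stmt11_general (N : ℕ) (hN : 0 < N) (ρ : ℝ) (hρ : 0 < ρ)
    (m m' : ℝ) (hm : m ∈ Set.Ioo (-Real.sqrt ρ) (Real.sqrt ρ))
    (hm' : m' ∈ Set.Ioo (-Real.sqrt ρ) (Real.sqrt ρ))
    (U : Matrix (Fin N) (Fin N) ℝ) (hU : GoodRotation hN U) :
    fluctDist 2 N (mcSpherical hN U m ρ) (mcSpherical hN U m' ρ) ≤
      (1 + 2 / Real.sqrt (1 - m ^ 2 / ρ)) * |m - m'| := by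
  calc fluctDist 2 N (mcSpherical hN U m ρ) (mcSpherical hN U m' ρ)
      ≤ √((m - m') ^ 2 + (√(ρ - m ^ 2) - √(ρ - m' ^ 2)) ^ 2) := by
        rw [mcSpherical_eq_map, mcSpherical_eq_map, Real.sqrt_eq_rpow]
        exact fluctDist_map_le zero_le_two _ (by fun_prop) (by fun_prop) (mcCost_le hN hU.1 m m' ρ)
    _ ≤ |m - m'| + |√(ρ - m ^ 2) - √(ρ - m' ^ 2)| := sqrt_sq_add_sq_le _ _
    _ ≤ |m - m'| + 2 / √(1 - m ^ 2 / ρ) * |m - m'| := by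
        gcongr
        exact abs_sqrt_sub_sq_sub_sqrt_sub_sq_le hρ (abs_lt.mpr hm) (abs_lt.mpr hm').le
    _ = (1 + 2 / √(1 - m ^ 2 / ρ)) * |m - m'| := by ring

theorem stmt11 (N : ℕ) (hN : 0 < N) (hN2 : 2 ≤ N) (ρ : ℝ) (hρ : 0 < ρ)
    (m m' : ℝ) (hm : m ∈ Set.Ioo (-Real.sqrt ρ) (Real.sqrt ρ))
    (hm' : m' ∈ Set.Ioo (-Real.sqrt ρ) (Real.sqrt ρ))
    (U : Matrix (Fin N) (Fin N) ℝ) (hU : GoodRotation hN U) :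
    fluctDist 2 N (mcSpherical hN U m ρ) (mcSpherical hN U m' ρ) ≤
      (1 + 2 / Real.sqrt (1 - m ^ 2 / ρ)) * |m - m'| :=
  stmt11_general N hN ρ hρ m m' hm hm' U hU
end
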